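/- Two arrays of distinct values have the same Cartesian tree if and only if they give the same answer to every range minimum query. -/

import Mathlib

inductive BT where
  | leaf : BT
  | node : BT → BT → BT
deriving DecidableEq

namespace BT

/-- Number of nodes. -/
def size : BT → ℕ
  | leaf => 0
  | node l r => l.size + r.size + 1

/-- Inorder list of node positions (paths from the root; `false` = left step). -/
def inList : BT → List (List Bool)
  | leaf => []
  | node l r => (l.inList).map (List.cons false) ++ [] :: (r.inList).map (List.cons true)

/-- Preorder list of node positions. -/
def preList : BT → List (List Bool)
  | leaf => []
  | node l r => [] :: ((l.preList).map (List.cons false) ++ (r.preList).map (List.cons true))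

/-- Subtree rooted at a given position, if the position is valid. -/
def subtree? : BT → List Bool → Option BT
  | t, [] => some t
  | leaf, _ :: _ => none
  | node l r, b :: p => if b then r.subtree? p else l.subtree? p

/-- Size of the left spine (maximal path following left children, top node included). -/
def Lspine : BT → ℕ
  | leaf => 0
  | node l _ => l.Lspine + 1

/-- Size of the right spine. -/
def Rspine : BT → ℕ
  | leaf => 0
  | node _ r => r.Rspine + 1

/-- Size of the left inner spine of the root: right spine of the left child. -/
def lv : BT → ℕ
  | leaf => 0
  | node l _ => l.Rspine

/-- Size of the right inner spine of the root: left spine of the right child. -/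
def rv : BT → ℕ
  | leaf => 0
  | node _ r => r.Lspine

/-- Sum of `f` over all (sub)trees rooted at nodes of the tree. -/
def sumNodes (f : BT → ℕ) : BT → ℕ
  | leaf => 0
  | node l r => f (node l r) + sumNodes f l + sumNodes f r

/-- Number of leaf nodes (nodes with no children). -/
def leaves : BT → ℕ
  | leaf => 0
  | node leaf leaf => 1
  | node l r => leaves l + leaves r

end BT

/-- Longest common prefix of two paths: the LCA of two positions in a binary tree. -/
def lcp : List Bool → List Bool → List Bool
  | a :: p, b :: q => if a = b then a :: lcp p q else []
  | _, _ => []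

/-- Index of the minimum element of a list (0 if empty). -/
def minIdx {α : Type*} [LinearOrder α] (l : List α) : ℕ :=
  match l.argmin id with
  | none => 0
  | some a => l.idxOf a

/-- Cartesian tree construction with fuel. -/
def cartesianAux {α : Type*} [LinearOrder α] : ℕ → List α → BT
  | 0, _ => .leaf
  | _ + 1, [] => .leaf
  | n + 1, l@(_ :: _) =>
      .node (cartesianAux n (l.take (minIdx l))) (cartesianAux n (l.drop (minIdx l + 1)))

/-- The Cartesian tree of a list: root at the position of the minimum,
recursively built on the prefix before and the suffix after the minimum. -/
def cartesian {α : Type*} [LinearOrder α] (l : List α) : BT :=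
  cartesianAux l.length l

/-- `k` is the position of the minimum of `A` on the range `[i, j]`. -/
def isArgmin {α : Type*} [LinearOrder α] {n : ℕ} (A : Fin n → α) (i j k : Fin n) : Prop :=
  i ≤ k ∧ k ≤ j ∧ ∀ m, i ≤ m → m ≤ j → A k ≤ A m

/-- `k` is the position of the second smallest element of `A` on the range `[i, j]`. -/
def isSecondMin {α : Type*} [LinearOrder α] {n : ℕ} (A : Fin n → α) (i j k : Fin n) : Prop :=
  i ≤ k ∧ k ≤ j ∧
    ∃ m, isArgmin A i j m ∧ k ≠ m ∧ ∀ l, i ≤ l → l ≤ j → l ≠ m → A k ≤ A l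

/-- The node with inorder number `i` in `t` has a left child. -/
def hasLeftChildAt (t : BT) (i : ℕ) : Prop :=
  ∃ (p : List Bool) (ll lr r : BT),
    t.inList[i]? = some p ∧ t.subtree? p = some (.node (.node ll lr) r)

/-!
Both sides satisfy the same recursion. Two Cartesian trees agree iff the roots sit at the same
position (the size of the left subtree) and the left and right subtrees agree, i.e. the minima
of the two arrays sit at the same position `m` and the prefixes before `m` and the suffixes after
`m` have equal Cartesian trees. Likewise, two arrays answer all range-minimum queries alike iff
the full-range query gives the same `m` and the prefixes and suffixes answer all queries alike:
every range containing `m` is answered by `m`, and every other range lies in the prefix or in the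
suffix. Induction on the length concludes.
-/

section CartesianTree

variable {α β : Type*} [LinearOrder α] [LinearOrder β]

theorem minIdx_lt_length {l : List α} (h : l ≠ []) : minIdx l < l.length := by
  unfold minIdx
  rcases hx : l.argmin id with _ | a
  · exact absurd (List.argmin_eq_none.mp hx) h
  · exact List.idxOf_lt_length_iff.mpr (List.argmin_mem hx)

theorem getElem_minIdx_le {l : List α} {m : ℕ} (hm : m < l.length) (hk : minIdx l < l.length) :
    l[minIdx l] ≤ l[m] := by
  rcases hx : l.argmin id with _ | a
  · simp [List.argmin_eq_none.mp hx] at hm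
  · have hidx : minIdx l = l.idxOf a := by unfold minIdx; rw [hx]
    simp only [hidx] at hk ⊢
    rw [List.getElem_idxOf hk]
    exact List.le_of_mem_argmin (l.getElem_mem hm) hx

theorem cartesianAux_congr_fuel {f g : ℕ} {l : List α} (hf : l.length ≤ f) (hg : l.length ≤ g) :
    cartesianAux f l = cartesianAux g l := by
  induction f generalizing g l with
  | zero => cases g <;> simp_all [cartesianAux]
  | succ f ih =>
    match l, g with
    | [], 0 | [], _ + 1 => rfl
    | _ :: _, 0 => simp at hg
    | a :: l, g + 1 =>
      have hm := minIdx_lt_length (l := a :: l) (List.cons_ne_nil a l)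
      simp only [List.length_cons] at hf hg hm
      simp only [cartesianAux]
      congr 1 <;> apply ih <;> simp only [List.length_take, List.length_drop, List.length_cons] <;>
        omega

theorem cartesian_of_ne_nil {l : List α} (h : l ≠ []) :
    cartesian l = .node (cartesian (l.take (minIdx l))) (cartesian (l.drop (minIdx l + 1))) := by
  have hm := minIdx_lt_length h
  obtain ⟨a, l, rfl⟩ := List.exists_cons_of_ne_nil h
  rw [cartesian, List.length_cons, cartesianAux]
  congr 1 <;> apply cartesianAux_congr_fuel <;>
    simp only [List.length_take, List.length_drop, List.length_cons] at hm ⊢ <;> omega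

theorem size_cartesianAux {f : ℕ} {l : List α} (hf : l.length ≤ f) :
    (cartesianAux f l).size = l.length := by
  induction f generalizing l with
  | zero =>
    obtain rfl : l = [] := List.eq_nil_of_length_eq_zero (by omega)
    rfl
  | succ f ih =>
    rcases eq_or_ne l [] with rfl | hne
    · rfl
    have hm := minIdx_lt_length hne
    obtain ⟨a, l, rfl⟩ := List.exists_cons_of_ne_nil hne
    simp only [List.length_cons] at hf hm
    rw [cartesianAux, BT.size, ih, ih] <;>
      simp only [List.length_take, List.length_drop, List.length_cons] <;> omega

theorem size_cartesian (l : List α) : (cartesian l).size = l.length :=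
  size_cartesianAux le_rfl

theorem cartesian_eq_cartesian_iff {l₁ : List α} {l₂ : List β} (h₁ : l₁ ≠ []) (h₂ : l₂ ≠ []) :
    cartesian l₁ = cartesian l₂ ↔ minIdx l₁ = minIdx l₂ ∧
      cartesian (l₁.take (minIdx l₁)) = cartesian (l₂.take (minIdx l₁)) ∧
      cartesian (l₁.drop (minIdx l₁ + 1)) = cartesian (l₂.drop (minIdx l₁ + 1)) := by
  rw [cartesian_of_ne_nil h₁, cartesian_of_ne_nil h₂, BT.node.injEq]
  constructor
  · rintro ⟨htake, hdrop⟩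
    have hm : minIdx l₁ = minIdx l₂ := by
      simpa only [size_cartesian, List.length_take, min_eq_left (minIdx_lt_length h₁).le,
        min_eq_left (minIdx_lt_length h₂).le] using congrArg BT.size htake
    rw [← hm] at htake hdrop
    exact ⟨hm, htake, hdrop⟩
  · rintro ⟨hm, htake, hdrop⟩
    rw [← hm]
    exact ⟨htake, hdrop⟩

structure IsRangeArgmin (l : List α) (i j k : ℕ) : Prop where
  le_argmin : i ≤ k
  argmin_le : k ≤ j
  lt_length : j < l.length
  getElem_le : ∀ m (_ : i ≤ m) (_ : m ≤ j), l[k]'(by omega) ≤ l[m]'(by omega)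

def RMQEquiv (l₁ : List α) (l₂ : List β) : Prop :=
  ∀ i j k, IsRangeArgmin l₁ i j k ↔ IsRangeArgmin l₂ i j k

theorem isRangeArgmin_take {l : List α} {t i j k : ℕ} :
    IsRangeArgmin (l.take t) i j k ↔ j < t ∧ IsRangeArgmin l i j k := by
  constructor
  · rintro ⟨hik, hkj, hj, hmin⟩
    simp only [List.length_take, lt_min_iff] at hj
    refine ⟨hj.1, hik, hkj, hj.2, fun m him hmj => ?_⟩
    simpa only [List.getElem_take] using hmin m him hmj
  · rintro ⟨hjt, hik, hkj, hj, hmin⟩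
    refine ⟨hik, hkj, by simp only [List.length_take, lt_min_iff]; omega, fun m him hmj => ?_⟩
    simpa only [List.getElem_take] using hmin m him hmj

theorem isRangeArgmin_drop {l : List α} {d i j k : ℕ} :
    IsRangeArgmin (l.drop d) i j k ↔ IsRangeArgmin l (d + i) (d + j) (d + k) := by
  constructor
  · rintro ⟨hik, hkj, hj, hmin⟩
    simp only [List.length_drop] at hj
    refine ⟨by omega, by omega, by omega, fun m him hmj => ?_⟩
    have := hmin (m - d) (by omega) (by omega)
    simp only [List.getElem_drop] at this
    simpa only [show d + (m - d) = m by omega] using this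
  · rintro ⟨hik, hkj, hj, hmin⟩
    refine ⟨by omega, by omega, by simp only [List.length_drop]; omega, fun m him hmj => ?_⟩
    simpa only [List.getElem_drop] using hmin (d + m) (by omega) (by omega)

theorem isRangeArgmin_iff_eq_minIdx {l : List α} (hl : l.Nodup) {i j k : ℕ}
    (hi : i ≤ minIdx l) (hj : minIdx l ≤ j) (hjl : j < l.length) :
    IsRangeArgmin l i j k ↔ k = minIdx l := by
  have hm : minIdx l < l.length := by omega
  constructor
  · intro h
    have hk : k < l.length := by have := h.argmin_le; omega
    exact hl.getElem_inj_iff.mp <|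
      le_antisymm (h.getElem_le _ hi hj) (getElem_minIdx_le hk hm)
  · rintro rfl
    exact ⟨hi, hj, hjl, fun m _ hmj => getElem_minIdx_le (by omega) hm⟩

theorem rmqEquiv_iff {l₁ : List α} {l₂ : List β} (h₁ : l₁.Nodup) (h₂ : l₂.Nodup)
    (hlen : l₁.length = l₂.length) (hne : l₁ ≠ []) :
    RMQEquiv l₁ l₂ ↔ minIdx l₁ = minIdx l₂ ∧
      RMQEquiv (l₁.take (minIdx l₁)) (l₂.take (minIdx l₁)) ∧
      RMQEquiv (l₁.drop (minIdx l₁ + 1)) (l₂.drop (minIdx l₁ + 1)) := by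
  have hm₁ := minIdx_lt_length hne
  have hm₂ := minIdx_lt_length (l := l₂) (by rintro rfl; simp_all)
  constructor
  · intro h
    refine ⟨?_, fun i j k => ?_, fun i j k => ?_⟩
    · have := h 0 (l₁.length - 1) (minIdx l₁)
      rw [isRangeArgmin_iff_eq_minIdx h₁ (by omega) (by omega) (by omega),
        isRangeArgmin_iff_eq_minIdx h₂ (by omega) (by omega) (by omega)] at this
      exact this.mp rfl
    · rw [isRangeArgmin_take, isRangeArgmin_take, h]
    · rw [isRangeArgmin_drop, isRangeArgmin_drop, h]
  · rintro ⟨hm, htake, hdrop⟩ i j k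
    by_cases hj : j < l₁.length
    swap
    · exact iff_of_false (fun h => hj h.lt_length) (fun h => hj (hlen ▸ h.lt_length))
    rcases lt_or_ge j (minIdx l₁) with hjm | hmj
    · simpa only [isRangeArgmin_take, hjm, true_and] using htake i j k
    rcases le_or_gt i (minIdx l₁) with him | hmi
    · rw [isRangeArgmin_iff_eq_minIdx h₁ him hmj hj,
        isRangeArgmin_iff_eq_minIdx h₂ (hm ▸ him) (hm ▸ hmj) (hlen ▸ hj), hm]
    by_cases hikj : i ≤ k ∧ k ≤ j
    swap
    · refine iff_of_false ?_ ?_ <;> exact fun h => hikj ⟨h.le_argmin, h.argmin_le⟩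
    obtain ⟨i, rfl⟩ := Nat.exists_eq_add_of_lt hmi
    obtain ⟨j, rfl⟩ : ∃ j', j = minIdx l₁ + 1 + j' := ⟨j - (minIdx l₁ + 1), by omega⟩
    obtain ⟨k, rfl⟩ : ∃ k', k = minIdx l₁ + 1 + k' := ⟨k - (minIdx l₁ + 1), by omega⟩
    simpa only [isRangeArgmin_drop, Nat.add_right_comm (minIdx l₁) 1 i] using hdrop i j k

theorem cartesian_eq_cartesian_iff_rmqEquiv {l₁ : List α} {l₂ : List β} (h₁ : l₁.Nodup)
    (h₂ : l₂.Nodup) (hlen : l₁.length = l₂.length) :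
    cartesian l₁ = cartesian l₂ ↔ RMQEquiv l₁ l₂ := by
  obtain ⟨n, hn⟩ : ∃ n, l₁.length = n := ⟨_, rfl⟩
  induction n using Nat.strong_induction_on generalizing l₁ l₂ with
  | _ n ih =>
  rcases eq_or_ne l₁ [] with rfl | hne₁
  · obtain rfl : l₂ = [] := List.eq_nil_of_length_eq_zero hlen.symm
    refine iff_of_true rfl fun i j k => iff_of_false ?_ ?_ <;>
      exact fun h => by simpa using h.lt_length
  have hne₂ : l₂ ≠ [] := List.ne_nil_of_length_pos (hlen ▸ List.length_pos_of_ne_nil hne₁)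
  have hm₁ := minIdx_lt_length hne₁
  have hm₂ := minIdx_lt_length hne₂
  rw [cartesian_eq_cartesian_iff hne₁ hne₂, rmqEquiv_iff h₁ h₂ hlen hne₁]
  refine and_congr_right fun hm => and_congr ?_ ?_
  · refine ih (minIdx l₁) (by omega) (h₁.sublist (List.take_sublist _ _))
      (h₂.sublist (List.take_sublist _ _)) ?_ ?_ <;> (simp only [List.length_take]; omega)
  · refine ih (l₁.length - (minIdx l₁ + 1)) (by omega) (h₁.sublist (List.drop_sublist _ _))
      (h₂.sublist (List.drop_sublist _ _)) ?_ ?_ <;> simp only [List.length_drop, hlen]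

theorem isArgmin_iff_isRangeArgmin {n : ℕ} (A : Fin n → α) (i j k : Fin n) :
    isArgmin A i j k ↔ IsRangeArgmin (List.ofFn A) i j k := by
  constructor
  · rintro ⟨hik, hkj, hmin⟩
    refine ⟨hik, hkj, by simp, fun m him hmj => ?_⟩
    simpa only [List.getElem_ofFn] using hmin ⟨m, by omega⟩ him hmj
  · rintro ⟨hik, hkj, _, hmin⟩
    refine ⟨hik, hkj, fun m him hmj => ?_⟩
    simpa only [List.getElem_ofFn] using hmin m him hmj

end CartesianTree

/-- Two arrays of distinct values have the same Cartesian tree iff they give the same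
answer to every range minimum query. -/
theorem stmt3 {α β : Type*} [LinearOrder α] [LinearOrder β] {n : ℕ}
    (A : Fin n → α) (B : Fin n → β)
    (hA : Function.Injective A) (hB : Function.Injective B) :
    cartesian (List.ofFn A) = cartesian (List.ofFn B) ↔
      ∀ i j k : Fin n, i ≤ j → (isArgmin A i j k ↔ isArgmin B i j k) := by
  rw [cartesian_eq_cartesian_iff_rmqEquiv (List.nodup_ofFn.mpr hA) (List.nodup_ofFn.mpr hB)
    (by simp)]
  simp only [isArgmin_iff_isRangeArgmin]
  refine ⟨fun h i j k _ => h i j k, fun h i j k => ?_⟩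
  by_cases hijk : i ≤ k ∧ k ≤ j ∧ j < n
  · exact h ⟨i, by omega⟩ ⟨j, hijk.2.2⟩ ⟨k, by omega⟩ (Fin.mk_le_mk.mpr (by omega))
  · refine iff_of_false ?_ ?_ <;>
      exact fun h => hijk ⟨h.le_argmin, h.argmin_le, by simpa using h.lt_length⟩
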